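/- arXiv:2308.00272 — 5 statements merged into one kernel-verified Lean document; each statement's English description precedes it below -/
import Mathlib

section
/- Let G = (V, E, c) be a labeled directed graph and G' = (V', E', c) an induced subgraph of G (with the inherited labeling). Then the subspace of Lie(G) spanned by V' together with the labels occurring on edges of G' is a Lie subalgebra of Lie(G), isomorphic to Lie(G'). -/
/-!
The basis vectors indexed by `V'` and by the labels of `G[V']` have pairwise brackets equal to
`0` or to `±` a label of `G[V']`, so their span is closed under the bracket. Being a subfamily
of `b`, they form a basis of that subalgebra, and they satisfy the
defining relations of `Lie(G[V'])` because those are the relations of `Lie(G)` restricted to it.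
-/

/-- A finite simple directed graph with edge labels: `lab x y = some l` means there is a
directed edge from `x` to `y` carrying label `l`. Simplicity: no loops, and at most one
of the two directions between a pair of vertices carries an edge. -/
structure LabeledDigraph (V C : Type*) where
  lab : V → V → Option C
  no_loops : ∀ v, lab v v = none
  one_dir : ∀ x y, (lab x y).isSome → lab y x = none

/-- Adjacency in the underlying undirected graph. -/
def LabeledDigraph.adj {V C : Type*} (G : LabeledDigraph V C) (x y : V) : Prop :=
  (G.lab x y).isSome ∨ (G.lab y x).isSome

/-- A Lie algebra `L` over `F` together with a basis `b` indexed by the vertices and the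
labels realizes `Lie(G)` if the bracket of two vertices joined by an edge is the label of
that edge (with a sign given by the orientation, which follows from antisymmetry), the
bracket of non-adjacent vertices is zero, and all labels are central. -/
def IsGraphLieAlg {V C F L : Type*} [Field F] [LieRing L] [LieAlgebra F L]
    (G : LabeledDigraph V C) (b : Module.Basis (V ⊕ C) F L) : Prop :=
  (∀ (x y : V) (l : C), G.lab x y = some l →
      ⁅b (Sum.inl x), b (Sum.inl y)⁆ = b (Sum.inr l)) ∧
  (∀ x y : V, G.lab x y = none → G.lab y x = none →
      ⁅b (Sum.inl x), b (Sum.inl y)⁆ = 0) ∧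
  (∀ (l : C) (z : L), ⁅b (Sum.inr l), z⁆ = 0)

/-- The labels occurring on edges of the subgraph of `G` induced by the vertex set `V'`. -/
def labelsOn {V C : Type*} (G : LabeledDigraph V C) (V' : Set V) : Set C :=
  {l | ∃ x ∈ V', ∃ y ∈ V', G.lab x y = some l}

open Submodule Set

namespace LieSubalgebra

variable {R L : Type*} [CommRing R] [LieRing L] [LieAlgebra R L]

theorem coe_lieSpan_eq_span_of_forall_lie_mem_span {s : Set L}
    (hs : ∀ᵉ (x ∈ s) (y ∈ s), ⁅x, y⁆ ∈ span R s) :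
    (lieSpan R L s : Submodule R L) = span R s := by
  suffices ∀ {x y}, x ∈ span R s → y ∈ span R s → ⁅x, y⁆ ∈ span R s by
    refine le_antisymm ?_ submodule_span_le_lieSpan
    change _ ≤ ({ span R s with lie_mem' := this } : LieSubalgebra R L)
    rw [lieSpan_le]
    exact subset_span
  intro x y hx hy
  induction hx, hy using span_induction₂ with
  | mem_mem x y hx hy => exact hs x hx y hy
  | zero_left y hy => simp
  | zero_right x hx => simp
  | add_left x y z _ _ _ hx hy => simpa only [add_lie] using add_mem hx hy
  | add_right x y z _ _ _ hx hy => simpa only [lie_add] using add_mem hx hy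
  | smul_left r x y _ _ h => simpa only [smul_lie] using smul_mem _ r h
  | smul_right r x y _ _ h => simpa only [lie_smul] using smul_mem _ r h

noncomputable def basisOfEqSpan {ι : Type*} {K : LieSubalgebra R L} {v : ι → L}
    (hv : LinearIndependent R v) (hK : (K : Submodule R L) = span R (range v)) :
    Module.Basis ι R K :=
  (Module.Basis.span hv).map (LinearEquiv.ofEq _ _ hK.symm)

@[simp]
theorem coe_basisOfEqSpan {ι : Type*} {K : LieSubalgebra R L} {v : ι → L}
    (hv : LinearIndependent R v) (hK : (K : Submodule R L) = span R (range v)) (i : ι) :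
    (basisOfEqSpan hv hK i : L) = v i :=
  congrArg Subtype.val (Module.Basis.span_apply hv i)

end LieSubalgebra

theorem Set.range_comp_sumMap_val {α β M : Type*} (f : α ⊕ β → M) (A : Set α) (B : Set β) :
    range (f ∘ Sum.map ((↑) : A → α) ((↑) : B → β)) = (f ∘ Sum.inl) '' A ∪ (f ∘ Sum.inr) '' B := by
  rw [← Sum.elim_comp_inl_inr f, Sum.elim_comp_map, Set.Sum.elim_range, range_comp, range_comp,
    Subtype.range_val, Subtype.range_val]
  rfl

namespace IsGraphLieAlg

variable {V C F L : Type*} [Field F] [LieRing L] [LieAlgebra F L]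
  {G : LabeledDigraph V C} {b : Module.Basis (V ⊕ C) F L}

theorem lie_inl_inl_mem_span_labelsOn (hb : IsGraphLieAlg G b) {V' : Set V} {x y : V}
    (hx : x ∈ V') (hy : y ∈ V') :
    ⁅b (Sum.inl x), b (Sum.inl y)⁆ ∈ span F ((b ∘ Sum.inr) '' labelsOn G V') := by
  rcases hxy : G.lab x y with _ | l
  · rcases hyx : G.lab y x with _ | l
    · rw [hb.2.1 x y hxy hyx]
      exact zero_mem _
    · rw [← lie_skew, hb.1 y x l hyx]
      exact neg_mem (subset_span ⟨l, ⟨y, hy, x, hx, hyx⟩, rfl⟩)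
  · rw [hb.1 x y l hxy]
    exact subset_span ⟨l, ⟨x, hx, y, hy, hxy⟩, rfl⟩

theorem forall_lie_mem_span_induced (hb : IsGraphLieAlg G b) (V' : Set V) :
    ∀ᵉ (u ∈ (b ∘ Sum.inl) '' V' ∪ (b ∘ Sum.inr) '' labelsOn G V')
      (w ∈ (b ∘ Sum.inl) '' V' ∪ (b ∘ Sum.inr) '' labelsOn G V'),
      ⁅u, w⁆ ∈ span F ((b ∘ Sum.inl) '' V' ∪ (b ∘ Sum.inr) '' labelsOn G V') := by
  rintro _ (⟨x, hx, rfl⟩ | ⟨l, -, rfl⟩) _ (⟨y, hy, rfl⟩ | ⟨m, -, rfl⟩)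
  · exact span_mono subset_union_right (hb.lie_inl_inl_mem_span_labelsOn hx hy)
  · rw [← lie_skew, Function.comp_apply, hb.2.2 m, neg_zero]
    exact zero_mem _
  all_goals
    rw [Function.comp_apply, hb.2.2 l]
    exact zero_mem _

end IsGraphLieAlg

theorem stmt4_general {V C F L : Type*} [Field F] [LieRing L] [LieAlgebra F L]
    (G : LabeledDigraph V C)
    (b : Module.Basis (V ⊕ C) F L) (hb : IsGraphLieAlg G b) (V' : Set V) :
    ∃ K : LieSubalgebra F L,
      (K : Submodule F L) = Submodule.span F
        ((b ∘ Sum.inl) '' V' ∪ (b ∘ Sum.inr) '' labelsOn G V') ∧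
      ∃ b' : Module.Basis (↥V' ⊕ ↥(labelsOn G V')) F K,
        (∀ (x y : ↥V') (l : C) (hl : l ∈ labelsOn G V'), G.lab x.1 y.1 = some l →
            ⁅b' (Sum.inl x), b' (Sum.inl y)⁆ = b' (Sum.inr ⟨l, hl⟩)) ∧
        (∀ x y : ↥V', G.lab x.1 y.1 = none → G.lab y.1 x.1 = none →
            ⁅b' (Sum.inl x), b' (Sum.inl y)⁆ = 0) ∧
        (∀ (l : ↥(labelsOn G V')) (z : K), ⁅b' (Sum.inr l), z⁆ = 0) := by
  set S := (b ∘ Sum.inl) '' V' ∪ (b ∘ Sum.inr) '' labelsOn G V'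
  have hK : (LieSubalgebra.lieSpan F L S : Submodule F L) = span F S :=
    LieSubalgebra.coe_lieSpan_eq_span_of_forall_lie_mem_span (hb.forall_lie_mem_span_induced V')
  have hv : LinearIndependent F (b ∘ Sum.map ((↑) : V' → V) ((↑) : labelsOn G V' → C)) :=
    b.linearIndependent.comp _ (Subtype.val_injective.sumMap Subtype.val_injective)
  let b' := LieSubalgebra.basisOfEqSpan hv (by rw [hK, range_comp_sumMap_val])
  refine ⟨_, hK, b', fun x y l hl hxy ↦ ?_, fun x y hxy hyx ↦ ?_, fun l z ↦ ?_⟩ <;>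
    ext <;> simp only [LieSubalgebra.coe_bracket, b', LieSubalgebra.coe_basisOfEqSpan,
      Function.comp_apply, Sum.map_inl, Sum.map_inr, ZeroMemClass.coe_zero]
  · exact hb.1 _ _ l hxy
  · exact hb.2.1 _ _ hxy hyx
  · exact hb.2.2 _ _

/-- For an induced subgraph `G'` of `G` on a vertex set `V'`, the span of the vertices of
`V'` together with the labels occurring on edges of `G'` is a Lie subalgebra of `Lie(G)`,
and it is isomorphic to `Lie(G')`: it carries a basis indexed by the vertices and labels
of `G'` realizing the Lie algebra of the induced labeled directed graph. -/
theorem stmt4 {V C F L : Type*} [Field F] [LieRing L] [LieAlgebra F L]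
    (hchar : (2 : F) ≠ 0) (G : LabeledDigraph V C)
    (b : Module.Basis (V ⊕ C) F L) (hb : IsGraphLieAlg G b) (V' : Set V) :
    ∃ K : LieSubalgebra F L,
      (K : Submodule F L) = Submodule.span F
        ((b ∘ Sum.inl) '' V' ∪ (b ∘ Sum.inr) '' labelsOn G V') ∧
      ∃ b' : Module.Basis (↥V' ⊕ ↥(labelsOn G V')) F K,
        (∀ (x y : ↥V') (l : C) (hl : l ∈ labelsOn G V'), G.lab x.1 y.1 = some l →
            ⁅b' (Sum.inl x), b' (Sum.inl y)⁆ = b' (Sum.inr ⟨l, hl⟩)) ∧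
        (∀ x y : ↥V', G.lab x.1 y.1 = none → G.lab y.1 x.1 = none →
            ⁅b' (Sum.inl x), b' (Sum.inl y)⁆ = 0) ∧
        (∀ (l : ↥(labelsOn G V')) (z : K), ⁅b' (Sum.inr l), z⁆ = 0) :=
  stmt4_general G b hb V'
end

section
/- Let G = (V, E, c) be a labeled directed graph and G' = (V', E', c) an induced subgraph such that for every pair of adjacent vertices x ∈ V' and y ∈ V (adjacent in G), the label c of the edge between x and y occurs as a label of some edge of G'. Then the subspace of Lie(G) spanned by V' and the labels of G' is an ideal of Lie(G). -/
theorem Submodule.exists_lieIdeal_coe_eq_span_of_lie_mem {R L : Type*} [CommRing R] [LieRing L]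
    [LieAlgebra R L] {T S : Set L} (hT : Submodule.span R T = ⊤)
    (h : ∀ t ∈ T, ∀ s ∈ S, ⁅t, s⁆ ∈ Submodule.span R S) :
    ∃ I : LieIdeal R L, (I : Submodule R L) = Submodule.span R S := by
  refine (Submodule.span R S).exists_lieSubmodule_coe_eq_iff L |>.mpr fun x m hm ↦ ?_
  have hx : x ∈ Submodule.span R T := hT ▸ Submodule.mem_top
  induction hx, hm using Submodule.span_induction₂ with
  | mem_mem t s ht hs => exact h t ht s hs
  | zero_left => simp
  | zero_right => simp
  | add_left _ _ _ _ _ _ h₁ h₂ => rw [add_lie]; exact add_mem h₁ h₂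
  | add_right _ _ _ _ _ _ h₁ h₂ => rw [lie_add]; exact add_mem h₁ h₂
  | smul_left r _ _ _ _ h₁ => rw [smul_lie]; exact Submodule.smul_mem _ r h₁
  | smul_right r _ _ _ _ h₁ => rw [lie_smul]; exact Submodule.smul_mem _ r h₁

namespace IsGraphLieAlg

variable {V C F L : Type*} [Field F] [LieRing L] [LieAlgebra F L] {G : LabeledDigraph V C}
  {b : Module.Basis (V ⊕ C) F L}

theorem lie_inr_right (hb : IsGraphLieAlg G b) (z : L) (l : C) : ⁅z, b (Sum.inr l)⁆ = 0 := by
  rw [← lie_skew, hb.2.2 l z, neg_zero]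

theorem lie_inl_inl_mem_span (hb : IsGraphLieAlg G b) (x y : V) :
    ⁅b (Sum.inl x), b (Sum.inl y)⁆ ∈
      Submodule.span F ((b ∘ Sum.inr) '' {l | G.lab x y = some l ∨ G.lab y x = some l}) := by
  rcases hxy : G.lab x y with _ | l
  · rcases hyx : G.lab y x with _ | l
    · rw [hb.2.1 x y hxy hyx]
      exact zero_mem _
    · rw [← lie_skew, hb.1 y x l hyx]
      exact neg_mem (Submodule.subset_span ⟨l, Or.inr rfl, rfl⟩)
  · rw [hb.1 x y l hxy]
    exact Submodule.subset_span ⟨l, Or.inl rfl, rfl⟩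

end IsGraphLieAlg

theorem stmt5_general {V C F L : Type*} [Field F] [LieRing L] [LieAlgebra F L]
    (G : LabeledDigraph V C)
    (b : Module.Basis (V ⊕ C) F L) (hb : IsGraphLieAlg G b) (V' : Set V)
    (hclosed : ∀ x ∈ V', ∀ (y : V) (l : C),
        (G.lab x y = some l ∨ G.lab y x = some l) → l ∈ labelsOn G V') :
    ∃ I : LieIdeal F L, (I : Submodule F L) = Submodule.span F
        ((b ∘ Sum.inl) '' V' ∪ (b ∘ Sum.inr) '' labelsOn G V') := by
  refine Submodule.exists_lieIdeal_coe_eq_span_of_lie_mem b.span_eq ?_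
  rintro _ ⟨y | l, rfl⟩ _ (⟨x, hx, rfl⟩ | ⟨l', -, rfl⟩)
  · refine Submodule.span_mono ?_ (hb.lie_inl_inl_mem_span y x)
    rintro _ ⟨l, hl, rfl⟩
    exact Or.inr ⟨l, hclosed x hx y l hl.symm, rfl⟩
  all_goals simp [hb.lie_inr_right, hb.2.2]

/-- If for every vertex `x ∈ V'` and every vertex `y` of `G` adjacent to it, the label of
the connecting edge occurs as a label of an edge of the induced subgraph on `V'`, then the
span of `V'` together with the labels of the induced subgraph is an ideal of `Lie(G)`. -/
theorem stmt5 {V C F L : Type*} [Field F] [LieRing L] [LieAlgebra F L]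
    (hchar : (2 : F) ≠ 0) (G : LabeledDigraph V C)
    (b : Module.Basis (V ⊕ C) F L) (hb : IsGraphLieAlg G b) (V' : Set V)
    (hclosed : ∀ x ∈ V', ∀ (y : V) (l : C),
        (G.lab x y = some l ∨ G.lab y x = some l) → l ∈ labelsOn G V') :
    ∃ I : LieIdeal F L, (I : Submodule F L) = Submodule.span F
        ((b ∘ Sum.inl) '' V' ∪ (b ∘ Sum.inr) '' labelsOn G V') :=
  stmt5_general G b hb V' hclosed
end

section
/- Let D be a strata-preserving derivation of the Lie algebra Lie(G_2) associated to K_{m,n} with all mn labels distinct, and write D(x_i) = Σ_r α_{ri} x_r + Σ_s β_{si} y_s and D(y_j) = Σ_r γ_{rj} x_r + Σ_s δ_{sj} y_s. If m ≥ 2 then all coefficients β_{si} vanish, and if n ≥ 2 then all coefficients γ_{rj} vanish; i.e., D preserves the subspaces span(X) and span(Y). -/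
/-!
Index `inl (inl i)` is `x_i`, `inl (inr j)` is `y_j` and `inr (i, j)` is `c_ij`. The
`c_qs`-coordinate of `⁅x_p, v⁆` is the `y_s`-coordinate of `v` if `q = p`, and `0` otherwise.
So applying `D` to `⁅x_i, x_i'⁆ = 0` with `i' ≠ i` and reading off the `c_i's`-coordinate
leaves exactly `β_si = 0`; symmetrically for `γ`, using `⁅y_j, y_j'⁆ = 0`. Since `D` maps
`x_i` and `y_j` into `span (X ∪ Y)`, the vanishing of `β` and `γ` is the span statement.
-/

open Sum

theorem LieDerivation.map_apply_eq_zero_of_lie_eq_zero {R L : Type*} [CommRing R] [LieRing L]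
    [LieAlgebra R L] (D : LieDerivation R L L) {a a' : L} (h : ⁅a, a'⁆ = 0)
    (φ ψ : L →ₗ[R] R) (hφa : ∀ w, φ ⁅a, w⁆ = 0) (hφa' : ∀ w, φ ⁅a', w⁆ = ψ w) :
    ψ (D a) = 0 := by
  have hD : φ (D ⁅a, a'⁆) = 0 := by rw [h, map_zero, map_zero]
  rwa [D.apply_lie_eq_sub, map_sub, hφa, hφa', zero_sub, neg_eq_zero] at hD

theorem Module.Basis.mem_span_range_comp_iff {R M ι κ : Type*} [Semiring R] [AddCommMonoid M]
    [Module R M] (b : Module.Basis ι R M) (f : κ → ι) {v : M} :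
    v ∈ Submodule.span R (Set.range (b ∘ f)) ↔ ∀ i ∉ Set.range f, b.repr v i = 0 := by
  rw [Set.range_comp, b.mem_span_image]
  refine ⟨fun h i hi => ?_, fun h i hi => ?_⟩
  · by_contra hne; exact hi (h (Finsupp.mem_support_iff.2 hne))
  · by_contra hne; exact (Finsupp.mem_support_iff.1 hi) (h i hne)

namespace CompleteBipartiteLie

variable {R L ι κ : Type*} [CommRing R] [LieRing L] [LieAlgebra R L]
  {b : Module.Basis ((ι ⊕ κ) ⊕ (ι × κ)) R L}

theorem repr_lie_x_apply_c
    (hxy : ∀ i j, ⁅b (inl (inl i)), b (inl (inr j))⁆ = b (inr (i, j)))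
    (hxx : ∀ i i', ⁅b (inl (inl i)), b (inl (inl i'))⁆ = 0)
    (hc : ∀ ij (z : L), ⁅b (inr ij), z⁆ = 0) [DecidableEq ι] (p q : ι) (s : κ) (v : L) :
    b.repr ⁅b (inl (inl p)), v⁆ (inr (q, s)) = if q = p then b.repr v (inl (inr s)) else 0 := by
  classical
  have hc' : ∀ ij (z : L), ⁅z, b (inr ij)⁆ = 0 := fun ij z => by rw [← lie_skew, hc, neg_zero]
  have key : b.coord (inr (q, s)) ∘ₗ LieAlgebra.ad R L (b (inl (inl p))) =
      if q = p then b.coord (inl (inr s)) else 0 := by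
    refine b.ext fun k => ?_
    rcases k with ((r | t) | ij)
    · split_ifs <;> simp [hxx]
    · split_ifs with hqp <;> simp [hxy, Finsupp.single_apply, hqp]
    · split_ifs <;> simp [hc']
  simpa [apply_ite (fun g : L →ₗ[R] R => g v)] using LinearMap.congr_fun key v

theorem repr_lie_y_apply_c
    (hxy : ∀ i j, ⁅b (inl (inl i)), b (inl (inr j))⁆ = b (inr (i, j)))
    (hyy : ∀ j j', ⁅b (inl (inr j)), b (inl (inr j'))⁆ = 0)
    (hc : ∀ ij (z : L), ⁅b (inr ij), z⁆ = 0) [DecidableEq κ] (p q : κ) (r : ι) (v : L) :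
    b.repr ⁅b (inl (inr p)), v⁆ (inr (r, q)) =
      if q = p then -b.repr v (inl (inl r)) else 0 := by
  classical
  have hc' : ∀ ij (z : L), ⁅z, b (inr ij)⁆ = 0 := fun ij z => by rw [← lie_skew, hc, neg_zero]
  have key : b.coord (inr (r, q)) ∘ₗ LieAlgebra.ad R L (b (inl (inr p))) =
      if q = p then -b.coord (inl (inl r)) else 0 := by
    refine b.ext fun k => ?_
    rcases k with ((t | t) | ij)
    · have hyx : ⁅b (inl (inr p)), b (inl (inl t))⁆ = -b (inr (t, p)) := by rw [← lie_skew, hxy]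
      split_ifs with hqp <;> simp [hyx, Finsupp.single_apply, hqp]
    · split_ifs <;> simp [hyy]
    · split_ifs <;> simp [hc']
  simpa [apply_ite (fun g : L →ₗ[R] R => g v)] using LinearMap.congr_fun key v

theorem repr_derivation_x_apply_y_eq_zero
    (hxy : ∀ i j, ⁅b (inl (inl i)), b (inl (inr j))⁆ = b (inr (i, j)))
    (hxx : ∀ i i', ⁅b (inl (inl i)), b (inl (inl i'))⁆ = 0)
    (hc : ∀ ij (z : L), ⁅b (inr ij), z⁆ = 0) (D : LieDerivation R L L) {i i' : ι}
    (hi' : i' ≠ i) (s : κ) :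
    b.repr (D (b (inl (inl i)))) (inl (inr s)) = 0 := by
  classical
  simpa using D.map_apply_eq_zero_of_lie_eq_zero (hxx i i') (b.coord (inr (i', s)))
    (b.coord (inl (inr s)))
    (fun w => by simp [repr_lie_x_apply_c hxy hxx hc, hi'])
    (fun w => by simp [repr_lie_x_apply_c hxy hxx hc])

theorem repr_derivation_y_apply_x_eq_zero
    (hxy : ∀ i j, ⁅b (inl (inl i)), b (inl (inr j))⁆ = b (inr (i, j)))
    (hyy : ∀ j j', ⁅b (inl (inr j)), b (inl (inr j'))⁆ = 0)
    (hc : ∀ ij (z : L), ⁅b (inr ij), z⁆ = 0) (D : LieDerivation R L L) {j j' : κ}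
    (hj' : j' ≠ j) (r : ι) :
    b.repr (D (b (inl (inr j)))) (inl (inl r)) = 0 := by
  classical
  simpa using D.map_apply_eq_zero_of_lie_eq_zero (hyy j j') (b.coord (inr (r, j')))
    (-b.coord (inl (inl r)))
    (fun w => by simp [repr_lie_y_apply_c hxy hyy hc, hj'])
    (fun w => by simp [repr_lie_y_apply_c hxy hyy hc])

end CompleteBipartiteLie

open CompleteBipartiteLie

theorem stmt12_general {F L : Type*} [Field F] [LieRing L] [LieAlgebra F L]
    (m n : ℕ)
    (b : Module.Basis ((Fin m ⊕ Fin n) ⊕ (Fin m × Fin n)) F L)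
    (hxy : ∀ (i : Fin m) (j : Fin n),
        ⁅b (Sum.inl (Sum.inl i)), b (Sum.inl (Sum.inr j))⁆ = b (Sum.inr (i, j)))
    (hxx : ∀ i i' : Fin m, ⁅b (Sum.inl (Sum.inl i)), b (Sum.inl (Sum.inl i'))⁆ = 0)
    (hyy : ∀ j j' : Fin n, ⁅b (Sum.inl (Sum.inr j)), b (Sum.inl (Sum.inr j'))⁆ = 0)
    (hc : ∀ (ij : Fin m × Fin n) (z : L), ⁅b (Sum.inr ij), z⁆ = 0)
    (D : LieDerivation F L L)
    (hD1 : ∀ v ∈ Submodule.span F (Set.range (b ∘ Sum.inl)),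
        D v ∈ Submodule.span F (Set.range (b ∘ Sum.inl))) :
    (2 ≤ m → ∀ (i : Fin m) (s : Fin n),
        b.repr (D (b (Sum.inl (Sum.inl i)))) (Sum.inl (Sum.inr s)) = 0) ∧
    (2 ≤ n → ∀ (j : Fin n) (r : Fin m),
        b.repr (D (b (Sum.inl (Sum.inr j)))) (Sum.inl (Sum.inl r)) = 0) ∧
    (2 ≤ m → ∀ i : Fin m, D (b (Sum.inl (Sum.inl i))) ∈
        Submodule.span F (Set.range fun r : Fin m => b (Sum.inl (Sum.inl r)))) ∧
    (2 ≤ n → ∀ j : Fin n, D (b (Sum.inl (Sum.inr j))) ∈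
        Submodule.span F (Set.range fun s : Fin n => b (Sum.inl (Sum.inr s)))) := by
  have hβ : 2 ≤ m → ∀ (i : Fin m) (s : Fin n),
      b.repr (D (b (inl (inl i)))) (inl (inr s)) = 0 := fun hm i s => by
    have : Nontrivial (Fin m) := Fin.nontrivial_iff_two_le.2 hm
    obtain ⟨i', hi'⟩ := exists_ne i
    exact repr_derivation_x_apply_y_eq_zero hxy hxx hc D hi' s
  have hγ : 2 ≤ n → ∀ (j : Fin n) (r : Fin m),
      b.repr (D (b (inl (inr j)))) (inl (inl r)) = 0 := fun hn j r => by
    have : Nontrivial (Fin n) := Fin.nontrivial_iff_two_le.2 hn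
    obtain ⟨j', hj'⟩ := exists_ne j
    exact repr_derivation_y_apply_x_eq_zero hxy hyy hc D hj' r
  have hD_inr (k : Fin m ⊕ Fin n) (ij : Fin m × Fin n) :
      b.repr (D (b (inl k))) (inr ij) = 0 :=
    (b.mem_span_range_comp_iff inl).1 (hD1 _ (Submodule.subset_span ⟨k, rfl⟩)) _ (by simp)
  refine ⟨hβ, hγ, fun hm i => ?_, fun hn j => ?_⟩
  · refine (b.mem_span_range_comp_iff (inl ∘ inl)).2 ?_
    rintro ((r | s) | ij) hk
    exacts [absurd ⟨r, rfl⟩ hk, hβ hm i s, hD_inr _ ij]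
  · refine (b.mem_span_range_comp_iff (inl ∘ inr)).2 ?_
    rintro ((r | s) | ij) hk
    exacts [hγ hn j r, absurd ⟨s, rfl⟩ hk, hD_inr _ ij]

/-- For the Lie algebra of `K_{m,n}` with all `mn` labels distinct, any strata-preserving
derivation `D` satisfies: if `m ≥ 2` then the `Y`-coefficients `β_{si}` of `D(xᵢ)` all
vanish, and if `n ≥ 2` then the `X`-coefficients `γ_{rj}` of `D(yⱼ)` all vanish; that is,
`D` preserves the subspaces `span(X)` and `span(Y)`. -/
theorem stmt12 {F L : Type*} [Field F] [LieRing L] [LieAlgebra F L]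
    (hchar : (2 : F) ≠ 0) (m n : ℕ)
    (b : Module.Basis ((Fin m ⊕ Fin n) ⊕ (Fin m × Fin n)) F L)
    (hxy : ∀ (i : Fin m) (j : Fin n),
        ⁅b (Sum.inl (Sum.inl i)), b (Sum.inl (Sum.inr j))⁆ = b (Sum.inr (i, j)))
    (hxx : ∀ i i' : Fin m, ⁅b (Sum.inl (Sum.inl i)), b (Sum.inl (Sum.inl i'))⁆ = 0)
    (hyy : ∀ j j' : Fin n, ⁅b (Sum.inl (Sum.inr j)), b (Sum.inl (Sum.inr j'))⁆ = 0)
    (hc : ∀ (ij : Fin m × Fin n) (z : L), ⁅b (Sum.inr ij), z⁆ = 0)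
    (D : LieDerivation F L L)
    (hD1 : ∀ v ∈ Submodule.span F (Set.range (b ∘ Sum.inl)),
        D v ∈ Submodule.span F (Set.range (b ∘ Sum.inl)))
    (hD2 : ∀ v ∈ Submodule.span F (Set.range (b ∘ Sum.inr)),
        D v ∈ Submodule.span F (Set.range (b ∘ Sum.inr))) :
    (2 ≤ m → ∀ (i : Fin m) (s : Fin n),
        b.repr (D (b (Sum.inl (Sum.inl i)))) (Sum.inl (Sum.inr s)) = 0) ∧
    (2 ≤ n → ∀ (j : Fin n) (r : Fin m),
        b.repr (D (b (Sum.inl (Sum.inr j)))) (Sum.inl (Sum.inl r)) = 0) ∧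
    (2 ≤ m → ∀ i : Fin m, D (b (Sum.inl (Sum.inl i))) ∈
        Submodule.span F (Set.range fun r : Fin m => b (Sum.inl (Sum.inl r)))) ∧
    (2 ≤ n → ∀ j : Fin n, D (b (Sum.inl (Sum.inr j))) ∈
        Submodule.span F (Set.range fun s : Fin n => b (Sum.inl (Sum.inr s)))) :=
  stmt12_general m n b hxy hxx hyy hc D hD1
end

section
/- Let D be a strata-preserving derivation of Lie(G_1), the Lie algebra of K_{m,n} with a single label u, with D(u) = λu, D(x_i) = Σ_r α_{ri} x_r + Σ_s β_{si} y_s, D(y_j) = Σ_r γ_{rj} x_r + Σ_s δ_{sj} y_s. Then for all i, i', j, j': Σ_s β_{si} = Σ_s β_{si'}, Σ_r γ_{rj} = Σ_r γ_{rj'}, and Σ_r α_{ri} + Σ_s δ_{sj} = λ. Conversely, any linear map of this form satisfying these equations is a derivation. -/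
/-!
Let `X` and `Y` be the sums of the `x`- and of the `y`-coordinates. Checking on basis vectors
gives `⁅v, w⁆ = ω(v, w) • u` with `ω = X ∧ Y`, so for `f u = λ u` the Leibniz rule is
equivalent to the scalar identity `λ ω(v, w) = ω(f v, w) + ω(v, f w)`. Both sides are bilinear,
so it suffices to test it on pairs of basis vectors: on `(xᵢ, xᵢ')`, `(yⱼ, yⱼ')` and `(xᵢ, yⱼ)`
it reads `Y(f xᵢ) = Y(f xᵢ')`, `X(f yⱼ) = X(f yⱼ')` and `X(f xᵢ) + Y(f yⱼ) = λ`, and it is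
trivial on pairs involving `u`.
-/

open Module

theorem Module.Basis.forall_leibniz_iff {F L ι : Type*} [CommRing F] [LieRing L]
    [LieAlgebra F L] (b : Basis ι F L) (f : L →ₗ[F] L) :
    (∀ v w : L, f ⁅v, w⁆ = ⁅f v, w⁆ + ⁅v, f w⁆) ↔
      ∀ k k' : ι, f ⁅b k, b k'⁆ = ⁅f (b k), b k'⁆ + ⁅b k, f (b k')⁆ := by
  let ad : L →ₗ[F] L →ₗ[F] L := LieModule.toEnd F L L
  refine ⟨fun h k k' => h (b k) (b k'), fun h v w => ?_⟩
  have := LinearMap.ext_basis (B := ad.compr₂ f) (B' := ad.comp f + ad.compl₂ f) b b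
    (by simpa [ad] using h)
  simpa [ad] using LinearMap.congr_fun₂ this v w

theorem leibniz_iff_of_lie_eq_smul {F L : Type*} [Field F] [LieRing L] [LieAlgebra F L]
    {ω : L → L → F} {z : L} (hz : z ≠ 0) (hω : ∀ v w : L, ⁅v, w⁆ = ω v w • z)
    {f : L →ₗ[F] L} {c : F} (hfz : f z = c • z) (v w : L) :
    f ⁅v, w⁆ = ⁅f v, w⁆ + ⁅v, f w⁆ ↔ c * ω v w = ω (f v) w + ω v (f w) := by
  rw [hω, hω, hω, map_smul, hfz, smul_smul, ← add_smul, mul_comm]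
  exact (smul_left_injective F hz).eq_iff

theorem Module.Basis.eq_repr_smul_of_mem_span_singleton {F M ι : Type*} [CommRing F]
    [AddCommGroup M] [Module F M] (b : Basis ι F M) {v : M} {k : ι} (hv : v ∈ F ∙ b k) :
    v = b.repr v k • b k := by
  obtain ⟨c, rfl⟩ := Submodule.mem_span_singleton.mp hv
  simp

namespace KmnLie

variable {F L ι κ : Type*} [CommRing F] [LieRing L] [LieAlgebra F L]
  (b : Basis ((ι ⊕ κ) ⊕ Unit) F L)

section XCoord

variable [Fintype ι]

noncomputable def xCoordSum : L →ₗ[F] F := ∑ r, b.coord (.inl (.inl r))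

theorem xCoordSum_apply (v : L) : xCoordSum b v = ∑ r, b.repr v (.inl (.inl r)) := by
  simp [xCoordSum]

@[simp] theorem xCoordSum_x (i : ι) : xCoordSum b (b (.inl (.inl i))) = 1 := by
  classical simp [xCoordSum_apply, Finsupp.single_apply]

@[simp] theorem xCoordSum_y (j : κ) : xCoordSum b (b (.inl (.inr j))) = 0 := by
  simp [xCoordSum_apply]

@[simp] theorem xCoordSum_u (u : Unit) : xCoordSum b (b (.inr u)) = 0 := by
  simp [xCoordSum_apply]

end XCoord

section YCoord

variable [Fintype κ]

noncomputable def yCoordSum : L →ₗ[F] F := ∑ s, b.coord (.inl (.inr s))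

theorem yCoordSum_apply (v : L) : yCoordSum b v = ∑ s, b.repr v (.inl (.inr s)) := by
  simp [yCoordSum]

@[simp] theorem yCoordSum_x (i : ι) : yCoordSum b (b (.inl (.inl i))) = 0 := by
  simp [yCoordSum_apply]

@[simp] theorem yCoordSum_y (j : κ) : yCoordSum b (b (.inl (.inr j))) = 1 := by
  classical simp [yCoordSum_apply, Finsupp.single_apply]

@[simp] theorem yCoordSum_u (u : Unit) : yCoordSum b (b (.inr u)) = 0 := by
  simp [yCoordSum_apply]

end YCoord

variable [Fintype ι] [Fintype κ]

noncomputable def bracketForm : L →ₗ[F] L →ₗ[F] F :=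
  (xCoordSum b).smulRight (yCoordSum b) - (yCoordSum b).smulRight (xCoordSum b)

theorem bracketForm_apply (v w : L) :
    bracketForm b v w = xCoordSum b v * yCoordSum b w - yCoordSum b v * xCoordSum b w := by
  simp [bracketForm]

variable {b}

theorem lie_eq_bracketForm_smul
    (hxy : ∀ i j, ⁅b (.inl (.inl i)), b (.inl (.inr j))⁆ = b (.inr ()))
    (hxx : ∀ i i', ⁅b (.inl (.inl i)), b (.inl (.inl i'))⁆ = 0)
    (hyy : ∀ j j', ⁅b (.inl (.inr j)), b (.inl (.inr j'))⁆ = 0)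
    (hu : ∀ z : L, ⁅b (.inr ()), z⁆ = 0) (v w : L) :
    ⁅v, w⁆ = bracketForm b v w • b (.inr ()) := by
  have hyx : ∀ j i, ⁅b (.inl (.inr j)), b (.inl (.inl i))⁆ = -b (.inr ()) := fun j i => by
    rw [← lie_skew, hxy]
  have hu_left : ∀ (u : Unit) (z : L), ⁅b (.inr u), z⁆ = 0 := fun () => hu
  have hu_right : ∀ (u : Unit) (z : L), ⁅z, b (.inr u)⁆ = 0 := fun () z => by
    rw [← lie_skew, hu, neg_zero]
  have := LinearMap.ext_basis (B := (LieModule.toEnd F L L : L →ₗ[F] L →ₗ[F] L))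
    (B' := (bracketForm b).compr₂ (LinearMap.toSpanSingleton F L (b (.inr ())))) b b <| by
    rintro ((i | j) | _) ((i' | j') | _) <;> simp [bracketForm_apply, *]
  simpa using LinearMap.congr_fun₂ this v w

theorem forall_basis_bracketForm_iff {f : L →ₗ[F] L} {c : F}
    (hfu : f (b (.inr ())) = c • b (.inr ())) :
    (∀ k k', c * bracketForm b (b k) (b k') =
        bracketForm b (f (b k)) (b k') + bracketForm b (b k) (f (b k'))) ↔
      (∀ i i', yCoordSum b (f (b (.inl (.inl i)))) = yCoordSum b (f (b (.inl (.inl i'))))) ∧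
      (∀ j j', xCoordSum b (f (b (.inl (.inr j)))) = xCoordSum b (f (b (.inl (.inr j'))))) ∧
      ∀ i j, xCoordSum b (f (b (.inl (.inl i)))) + yCoordSum b (f (b (.inl (.inr j)))) = c := by
  simp only [bracketForm_apply]
  constructor
  · intro h
    refine ⟨fun i i' => ?_, fun j j' => ?_, fun i j => ?_⟩
    · have := h (.inl (.inl i)) (.inl (.inl i'))
      simp only [xCoordSum_x, yCoordSum_x] at this
      grind
    · have := h (.inl (.inr j)) (.inl (.inr j'))
      simp only [xCoordSum_y, yCoordSum_y] at this
      grind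
    · have := h (.inl (.inl i)) (.inl (.inr j))
      simp only [xCoordSum_x, xCoordSum_y, yCoordSum_x, yCoordSum_y] at this
      grind
  · rintro ⟨h1, h2, h3⟩ ((i | j) | ⟨⟩) ((i' | j') | ⟨⟩) <;>
      simp only [xCoordSum_x, xCoordSum_y, xCoordSum_u, yCoordSum_x, yCoordSum_y, yCoordSum_u,
        hfu, map_smul, smul_eq_mul] <;> grind

end KmnLie

open Finset in
theorem stmt13_general {F L : Type*} [Field F] [LieRing L] [LieAlgebra F L]
    (m n : ℕ)
    (b : Module.Basis ((Fin m ⊕ Fin n) ⊕ Unit) F L)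
    (hxy : ∀ (i : Fin m) (j : Fin n),
        ⁅b (Sum.inl (Sum.inl i)), b (Sum.inl (Sum.inr j))⁆ = b (Sum.inr ()))
    (hxx : ∀ i i' : Fin m, ⁅b (Sum.inl (Sum.inl i)), b (Sum.inl (Sum.inl i'))⁆ = 0)
    (hyy : ∀ j j' : Fin n, ⁅b (Sum.inl (Sum.inr j)), b (Sum.inl (Sum.inr j'))⁆ = 0)
    (hu : ∀ z : L, ⁅b (Sum.inr ()), z⁆ = 0)
    (f : L →ₗ[F] L)
    (hf2 : f (b (Sum.inr ())) ∈ F ∙ b (Sum.inr ())) :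
    (∀ u v : L, f ⁅u, v⁆ = ⁅f u, v⁆ + ⁅u, f v⁆) ↔
    ((∀ i i' : Fin m,
        ∑ s : Fin n, b.repr (f (b (Sum.inl (Sum.inl i)))) (Sum.inl (Sum.inr s)) =
        ∑ s : Fin n, b.repr (f (b (Sum.inl (Sum.inl i')))) (Sum.inl (Sum.inr s))) ∧
     (∀ j j' : Fin n,
        ∑ r : Fin m, b.repr (f (b (Sum.inl (Sum.inr j)))) (Sum.inl (Sum.inl r)) =
        ∑ r : Fin m, b.repr (f (b (Sum.inl (Sum.inr j')))) (Sum.inl (Sum.inl r))) ∧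
     (∀ (i : Fin m) (j : Fin n),
        (∑ r : Fin m, b.repr (f (b (Sum.inl (Sum.inl i)))) (Sum.inl (Sum.inl r))) +
        (∑ s : Fin n, b.repr (f (b (Sum.inl (Sum.inr j)))) (Sum.inl (Sum.inr s))) =
        b.repr (f (b (Sum.inr ()))) (Sum.inr ()))) := by
  have hbracket := KmnLie.lie_eq_bracketForm_smul hxy hxx hyy hu
  have hfu := b.eq_repr_smul_of_mem_span_singleton hf2
  rw [b.forall_leibniz_iff f]
  simp only [leibniz_iff_of_lie_eq_smul (b.ne_zero _) hbracket hfu]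
  rw [KmnLie.forall_basis_bracketForm_iff hfu]
  simp only [KmnLie.xCoordSum_apply, KmnLie.yCoordSum_apply]

open Finset in
/-- Characterization of the strata-preserving derivations of the Lie algebra `Lie(G₁)` of
`K_{m,n}` with a single label `u`: a strata-preserving linear map `f` with
`f(xᵢ) = Σ_r α_{ri} x_r + Σ_s β_{si} y_s`, `f(yⱼ) = Σ_r γ_{rj} x_r + Σ_s δ_{sj} y_s` and
`f(u) = λ u` is a derivation if and only if for all `i, i', j, j'` one has
`Σ_s β_{si} = Σ_s β_{si'}`, `Σ_r γ_{rj} = Σ_r γ_{rj'}` and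
`Σ_r α_{ri} + Σ_s δ_{sj} = λ`. -/
theorem stmt13 {F L : Type*} [Field F] [LieRing L] [LieAlgebra F L]
    (hchar : (2 : F) ≠ 0) (m n : ℕ)
    (b : Module.Basis ((Fin m ⊕ Fin n) ⊕ Unit) F L)
    (hxy : ∀ (i : Fin m) (j : Fin n),
        ⁅b (Sum.inl (Sum.inl i)), b (Sum.inl (Sum.inr j))⁆ = b (Sum.inr ()))
    (hxx : ∀ i i' : Fin m, ⁅b (Sum.inl (Sum.inl i)), b (Sum.inl (Sum.inl i'))⁆ = 0)
    (hyy : ∀ j j' : Fin n, ⁅b (Sum.inl (Sum.inr j)), b (Sum.inl (Sum.inr j'))⁆ = 0)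
    (hu : ∀ z : L, ⁅b (Sum.inr ()), z⁆ = 0)
    (f : L →ₗ[F] L)
    (hf1 : ∀ v ∈ Submodule.span F (Set.range (b ∘ Sum.inl)),
        f v ∈ Submodule.span F (Set.range (b ∘ Sum.inl)))
    (hf2 : f (b (Sum.inr ())) ∈ F ∙ b (Sum.inr ())) :
    (∀ u v : L, f ⁅u, v⁆ = ⁅f u, v⁆ + ⁅u, f v⁆) ↔
    ((∀ i i' : Fin m,
        ∑ s : Fin n, b.repr (f (b (Sum.inl (Sum.inl i)))) (Sum.inl (Sum.inr s)) =
        ∑ s : Fin n, b.repr (f (b (Sum.inl (Sum.inl i')))) (Sum.inl (Sum.inr s))) ∧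
     (∀ j j' : Fin n,
        ∑ r : Fin m, b.repr (f (b (Sum.inl (Sum.inr j)))) (Sum.inl (Sum.inl r)) =
        ∑ r : Fin m, b.repr (f (b (Sum.inl (Sum.inr j')))) (Sum.inl (Sum.inl r))) ∧
     (∀ (i : Fin m) (j : Fin n),
        (∑ r : Fin m, b.repr (f (b (Sum.inl (Sum.inl i)))) (Sum.inl (Sum.inl r))) +
        (∑ s : Fin n, b.repr (f (b (Sum.inl (Sum.inr j)))) (Sum.inl (Sum.inr s))) =
        b.repr (f (b (Sum.inr ()))) (Sum.inr ()))) :=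
  stmt13_general m n b hxy hxx hyy hu f hf2
end

section
/- Let G = (V, E, c) be a labeled directed graph such that each label appears at most once in each connected component of G, and let G' = (V, E', c) be the graph obtained by simultaneously reversing the direction of all edges carrying a fixed label. Then Lie(G) ≅ Lie(G'). -/
open Module

section BasisLie

variable {R L L' ι : Type*} [CommRing R] [LieRing L] [LieAlgebra R L] [LieRing L']
  [LieAlgebra R L']

theorem LinearMap.map_lie_of_basis (f : L →ₗ[R] L') (b : Basis ι R L)
    (h : ∀ i j, f ⁅b i, b j⁆ = ⁅f (b i), f (b j)⁆) (x y : L) : f ⁅x, y⁆ = ⁅f x, f y⁆ := by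
  have hbil : (LieModule.toEnd R L L : L →ₗ[R] L →ₗ[R] L).compr₂ f =
      (LieModule.toEnd R L' L' : L' →ₗ[R] L' →ₗ[R] L').compl₁₂ f f :=
    LinearMap.ext_basis b b fun i j => by simpa using h i j
  simpa using LinearMap.congr_fun₂ hbil x y

def LinearEquiv.toLieEquivOfBasis (e : L ≃ₗ[R] L') (b : Basis ι R L)
    (h : ∀ i j, e ⁅b i, b j⁆ = ⁅e (b i), e (b j)⁆) : L ≃ₗ⁅R⁆ L' :=
  { e with map_lie' := fun {x y} => e.toLinearMap.map_lie_of_basis b h x y }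

end BasisLie

namespace IsGraphLieAlg

variable {V C F L : Type*} [Field F] [LieRing L] [LieAlgebra F L]
  {G : LabeledDigraph V C} {b : Basis (V ⊕ C) F L}

theorem lie_inl_inl (hb : IsGraphLieAlg G b) (x y : V) :
    ⁅b (.inl x), b (.inl y)⁆ =
      (G.lab x y).elim 0 (b ∘ .inr) - (G.lab y x).elim 0 (b ∘ .inr) := by
  rcases hxy : G.lab x y with _ | l <;> rcases hyx : G.lab y x with _ | m
  · simp [hb.2.1 x y hxy hyx]
  · rw [← lie_skew, hb.1 y x m hyx]
    simp
  · simp [hb.1 x y l hxy]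
  · simp [G.one_dir x y (by simp [hxy])] at hyx

theorem inr_lie (hb : IsGraphLieAlg G b) (l : C) (z : L) : ⁅b (.inr l), z⁆ = 0 :=
  hb.2.2 l z

theorem lie_inr (hb : IsGraphLieAlg G b) (z : L) (l : C) : ⁅z, b (.inr l)⁆ = 0 := by
  rw [← lie_skew, hb.inr_lie, neg_zero]

end IsGraphLieAlg

theorem elim_sub_elim_of_reverse {V C M : Type*} [AddCommGroup M] [DecidableEq C]
    {G G' : LabeledDigraph V C} {l₀ : C}
    (hrev : ∀ x y : V, G'.lab x y =
        if G.lab y x = some l₀ then some l₀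
        else if G.lab x y = some l₀ then none
        else G.lab x y)
    {v w : C → M} (hv : ∀ l, v l = if l = l₀ then -w l else w l) (x y : V) :
    (G.lab x y).elim 0 v - (G.lab y x).elim 0 v =
      (G'.lab x y).elim 0 w - (G'.lab y x).elim 0 w := by
  have hvw : ∀ o : Option C, o ≠ some l₀ → o.elim 0 v = o.elim 0 w := by
    rintro (_ | l) hl
    · rfl
    · simp [hv, show l ≠ l₀ by simpa using hl]
  by_cases hxy : G.lab x y = some l₀
  · have hyx : G.lab y x = none := G.one_dir x y (by simp [hxy])
    simp [hrev, hxy, hyx, hv]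
  by_cases hyx : G.lab y x = some l₀
  · have hxy' : G.lab x y = none := G.one_dir y x (by simp [hyx])
    simp [hrev, hxy', hyx, hv]
  simp [hrev, hxy, hyx, hvw _ hxy, hvw _ hyx]

section NegLabel

variable {V C F L L' : Type*} [Field F] [DecidableEq C] [LieRing L] [LieAlgebra F L]
  [LieRing L'] [LieAlgebra F L']

def labelNegation (l₀ : C) : V ⊕ C → Fˣ :=
  Sum.elim (fun _ => 1) fun l => if l = l₀ then -1 else 1

noncomputable def negLabelEquiv (b : Basis (V ⊕ C) F L) (b' : Basis (V ⊕ C) F L') (l₀ : C) :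
    L ≃ₗ[F] L' :=
  b.equiv (b'.unitsSMul (labelNegation l₀)) (Equiv.refl _)

variable (b : Basis (V ⊕ C) F L) (b' : Basis (V ⊕ C) F L') (l₀ : C)

theorem negLabelEquiv_inl (x : V) : negLabelEquiv b b' l₀ (b (.inl x)) = b' (.inl x) := by
  simp [negLabelEquiv, Basis.unitsSMul_apply, labelNegation]

theorem negLabelEquiv_inr (l : C) :
    negLabelEquiv b b' l₀ (b (.inr l)) = if l = l₀ then -b' (.inr l) else b' (.inr l) := by
  split_ifs with h <;> simp [negLabelEquiv, Basis.unitsSMul_apply, labelNegation, h]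

theorem negLabelEquiv_optionElim (o : Option C) :
    negLabelEquiv b b' l₀ (o.elim 0 (b ∘ .inr)) =
      o.elim 0 fun l => negLabelEquiv b b' l₀ (b (.inr l)) := by
  rcases o with _ | l <;> simp

variable {b b' l₀} {G G' : LabeledDigraph V C}

theorem negLabelEquiv_map_lie (hrev : ∀ x y : V, G'.lab x y =
        if G.lab y x = some l₀ then some l₀
        else if G.lab x y = some l₀ then none
        else G.lab x y)
    (hb : IsGraphLieAlg G b) (hb' : IsGraphLieAlg G' b') (i j : V ⊕ C) :
    negLabelEquiv b b' l₀ ⁅b i, b j⁆ =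
      ⁅negLabelEquiv b b' l₀ (b i), negLabelEquiv b b' l₀ (b j)⁆ := by
  rcases i with x | m <;> rcases j with y | n
  · rw [hb.lie_inl_inl, map_sub, negLabelEquiv_optionElim, negLabelEquiv_optionElim,
      negLabelEquiv_inl, negLabelEquiv_inl, hb'.lie_inl_inl,
      elim_sub_elim_of_reverse hrev (negLabelEquiv_inr b b' l₀)]
    rfl
  · rw [hb.lie_inr, map_zero, negLabelEquiv_inr]
    split_ifs <;> simp [hb'.lie_inr]
  all_goals
    rw [hb.inr_lie, map_zero, negLabelEquiv_inr]
    split_ifs <;> simp [hb'.inr_lie]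

end NegLabel

theorem stmt15_general {V C F L L' : Type*} [Field F] [DecidableEq C]
    [LieRing L] [LieAlgebra F L] [LieRing L'] [LieAlgebra F L']
    (G G' : LabeledDigraph V C) (l₀ : C)
    (hrev : ∀ x y : V, G'.lab x y =
        if G.lab y x = some l₀ then some l₀
        else if G.lab x y = some l₀ then none
        else G.lab x y)
    (b : Module.Basis (V ⊕ C) F L) (hb : IsGraphLieAlg G b)
    (b' : Module.Basis (V ⊕ C) F L') (hb' : IsGraphLieAlg G' b') :
    Nonempty (L ≃ₗ⁅F⁆ L') :=
  ⟨(negLabelEquiv b b' l₀).toLieEquivOfBasis b (negLabelEquiv_map_lie hrev hb hb')⟩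

/-- Suppose each label appears at most once in each connected component of `G`, and `G'`
is obtained from `G` by simultaneously reversing the direction of all edges carrying the
fixed label `l₀`. Then `Lie(G) ≅ Lie(G')`. -/
theorem stmt15 {V C F L L' : Type*} [Field F] [DecidableEq C]
    [LieRing L] [LieAlgebra F L] [LieRing L'] [LieAlgebra F L']
    (hchar : (2 : F) ≠ 0)
    (G G' : LabeledDigraph V C) (l₀ : C)
    (honce : ∀ (x y x' y' : V) (l : C), G.lab x y = some l → G.lab x' y' = some l →
        Relation.ReflTransGen G.adj x x' → x = x' ∧ y = y')
    (hrev : ∀ x y : V, G'.lab x y =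
        if G.lab y x = some l₀ then some l₀
        else if G.lab x y = some l₀ then none
        else G.lab x y)
    (b : Module.Basis (V ⊕ C) F L) (hb : IsGraphLieAlg G b)
    (b' : Module.Basis (V ⊕ C) F L') (hb' : IsGraphLieAlg G' b') :
    Nonempty (L ≃ₗ⁅F⁆ L') :=
  stmt15_general G G' l₀ hrev b hb b' hb'
end
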